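/- arXiv:1811.08535 — 4 statements merged into one kernel-verified Lean document; each statement's English description precedes it below -/
import Mathlib

section
/- If a finite simple undirected graph G on vertex set V has vertex connectivity at least 2f (for f > 0), then G is f-good. -/
open Finset

/-- Γ(S): vertices outside `S` with a neighbor in `S`. -/
def nbhd {V : Type*} [Fintype V] [DecidableEq V] (G : SimpleGraph V) [DecidableRel G.Adj]
    (S : Finset V) : Finset V :=
  Finset.univ.filter (fun v => v ∉ S ∧ ∃ u ∈ S, G.Adj u v)

/-- `T →k S`: `|Γ(S) ∩ T| ≥ k`. -/
def connTo {V : Type*} [Fintype V] [DecidableEq V] (G : SimpleGraph V) [DecidableRel G.Adj]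
    (k : ℕ) (T S : Finset V) : Prop :=
  k ≤ (nbhd G S ∩ T).card

/-- `(L, C, R)` is an `F`-partition. -/
def FPartition {V : Type*} [Fintype V] [DecidableEq V] (F L C R : Finset V) : Prop :=
  Disjoint L C ∧ Disjoint L R ∧ Disjoint C R ∧ L ∪ C ∪ R = Finset.univ ∧
    (L \ F).Nonempty ∧ (R \ F).Nonempty

/-- `G` is `f`-good. -/
def fGood {V : Type*} [Fintype V] [DecidableEq V] (G : SimpleGraph V) [DecidableRel G.Adj]
    (f : ℕ) : Prop :=
  ∀ F L C R : Finset V, F.card ≤ f → FPartition F L C R →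
    connTo G (f + 1) (R ∪ C) (L \ F) ∨ connTo G (f + 1) (L ∪ C) (R \ F)

/-- `G` is `k`-connected: more than `k` vertices, and removing fewer than `k`
vertices leaves the graph connected. -/
def kConnected {V : Type*} [Fintype V] [DecidableEq V] (G : SimpleGraph V) (k : ℕ) : Prop :=
  k < Fintype.card V ∧
    ∀ T : Finset V, T.card < k → ((⊤ : G.Subgraph).deleteVerts ↑T).coe.Connected

/-!
Suppose neither side sends `f + 1` edges across. The neighbourhood of `L \ F` lies in
`(L ∩ F) ∪ A`, where `A`, its part outside `L`, has at most `f` vertices. Unless `L ∩ F` has `f`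
vertices, the neighbourhood has fewer than `2f` vertices, so it cannot separate `L \ F` from
anything and all of `Lᶜ` lies in `A`: `|Lᶜ| ≤ f`. The same holds for `R`. As `|F| ≤ f`, `f > 0`,
and `L \ F`, `R \ F` are nonempty, every combination of these alternatives contradicts `|V| > 2f`.
-/

section

variable {V : Type*} [Fintype V] [DecidableEq V] {G : SimpleGraph V} [DecidableRel G.Adj]

@[simp]
theorem mem_nbhd {S : Finset V} {v : V} : v ∈ nbhd G S ↔ v ∉ S ∧ ∃ u ∈ S, G.Adj u v := by
  simp [nbhd]

theorem kConnected.compl_subset_nbhd {k : ℕ} (hG : kConnected G k) {S : Finset V}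
    (hS : S.Nonempty) (hk : (nbhd G S).card < k) : Sᶜ ⊆ nbhd G S := by
  intro v hvS
  by_contra hvN
  obtain ⟨x, hx⟩ := hS
  obtain ⟨p⟩ := (hG.2 _ hk).preconnected ⟨x, by simp [hx]⟩ ⟨v, by simpa using hvN⟩
  obtain ⟨d, -, hfst, hsnd⟩ := p.exists_boundary_dart {w | (w : V) ∈ S} hx (by simpa using hvS)
  have hadj : G.Adj d.fst d.snd := SimpleGraph.Subgraph.coe_adj_sub _ _ _ d.adj
  have hout : (d.snd : V) ∉ nbhd G S := by simpa using d.snd.2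
  exact hout (mem_nbhd.2 ⟨hsnd, _, hfst, hadj⟩)

theorem kConnected.card_compl_le_or_le_card_inter {f : ℕ} (hG : kConnected G (2 * f))
    {F L : Finset V} (hL : (L \ F).Nonempty) (hout : (nbhd G (L \ F) ∩ Lᶜ).card ≤ f) :
    Lᶜ.card ≤ f ∨ f ≤ (L ∩ F).card := by
  refine or_iff_not_imp_right.2 fun hFL => ?_
  have hsplit : nbhd G (L \ F) ⊆ (L ∩ F) ∪ (nbhd G (L \ F) ∩ Lᶜ) := by
    intro v hv
    by_cases hvL : v ∈ L
    · have hvF : v ∈ F := by_contra fun hvF => (mem_nbhd.1 hv).1 (mem_sdiff.2 ⟨hvL, hvF⟩)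
      exact mem_union_left _ (mem_inter.2 ⟨hvL, hvF⟩)
    · exact mem_union_right _ (mem_inter.2 ⟨hv, mem_compl.2 hvL⟩)
  have hsmall : (nbhd G (L \ F)).card < 2 * f := calc
    _ ≤ (L ∩ F).card + (nbhd G (L \ F) ∩ Lᶜ).card :=
      (card_le_card hsplit).trans (card_union_le _ _)
    _ < 2 * f := by omega
  have hcover := hG.compl_subset_nbhd hL hsmall
  calc Lᶜ.card ≤ (nbhd G (L \ F) ∩ Lᶜ).card :=
        card_le_card fun v hv => mem_inter.2 ⟨hcover (compl_subset_compl.2 sdiff_subset hv), hv⟩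
    _ ≤ f := hout

end

theorem stmt0 {V : Type*} [Fintype V] [DecidableEq V] (G : SimpleGraph V) [DecidableRel G.Adj]
    (f : ℕ) (hf : 0 < f) (hconn : kConnected G (2 * f)) : fGood G f := by
  intro F L C R hF ⟨hLC, hLR, hCR, hcover, hL, hR⟩
  have hLc : R ∪ C = Lᶜ := by
    refine IsCompl.eq_compl ⟨disjoint_union_left.2 ⟨hLR.symm, hLC.symm⟩, codisjoint_iff.2 ?_⟩
    rw [top_eq_univ, ← hcover, sup_eq_union]
    ac_rfl
  have hRc : L ∪ C = Rᶜ :=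
    IsCompl.eq_compl ⟨disjoint_union_left.2 ⟨hLR, hCR⟩, codisjoint_iff.2 hcover⟩
  by_contra! h
  simp only [connTo, not_le, Nat.lt_succ_iff, hLc, hRc] at h
  have hV : Fintype.card V ≤ Lᶜ.card + Rᶜ.card := by
    rw [← card_univ, ← compl_empty, ← disjoint_iff_inter_eq_empty.1 hLR, compl_inter]
    exact card_union_le _ _
  have hFLR : (L ∩ F).card + (R ∩ F).card ≤ f := by
    rw [← card_union_of_disjoint (hLR.mono inter_subset_left inter_subset_left)]
    exact (card_le_card (union_subset inter_subset_right inter_subset_right)).trans hF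
  have hLsize := card_inter_add_card_sdiff L F
  have hRsize := card_inter_add_card_sdiff R F
  have hRsub : R.card ≤ Lᶜ.card := card_le_card (subset_compl_iff_disjoint_right.2 hLR.symm)
  have hLsub : L.card ≤ Rᶜ.card := card_le_card (subset_compl_iff_disjoint_right.2 hLR)
  have := hconn.1
  have := card_pos.2 hL
  have := card_pos.2 hR
  rcases hconn.card_compl_le_or_le_card_inter hL h.1 with h1 | h1 <;>
    rcases hconn.card_compl_le_or_le_card_inter hR h.2 with h2 | h2 <;> omega
end

section
/- Let G = (V,E) be a graph, let F ⊆ V with |F| ≤ f, and let (L, C, R) be an F-partition of G such that neither R ∪ C →(f+1) L \ F nor L ∪ C →(f+1) R \ F. If |R ∪ C| > f and |L ∪ C| ≤ f, then every vertex u ∈ L \ F has degree strictly less than 2f in G. -/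
open Finset

/-! A neighbour of `u ∈ L \ F` lies either in `L \ {u}`, which has at most `f - 1` elements, or in
`Γ(L \ F) ∩ (R ∪ C)`, which has at most `f` elements because `R ∪ C` does not `(f+1)`-connect to
`L \ F`. -/

section

variable {V : Type*} [Fintype V] [DecidableEq V] (G : SimpleGraph V) [DecidableRel G.Adj]

theorem neighborFinset_subset_erase_union_nbhd_sdiff {S A : Finset V} {u : V} (hu : u ∈ S)
    (hSA : S ⊆ A) : G.neighborFinset u ⊆ A.erase u ∪ (nbhd G S \ A) := by
  intro v hv
  rw [SimpleGraph.mem_neighborFinset] at hv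
  by_cases hvA : v ∈ A
  · exact mem_union_left _ (mem_erase.mpr ⟨hv.ne', hvA⟩)
  · refine mem_union_right _ (mem_sdiff.mpr ⟨?_, hvA⟩)
    simp only [nbhd, mem_filter, mem_univ, true_and]
    exact ⟨fun hvS => hvA (hSA hvS), u, hu, hv⟩

theorem degree_le_card_erase_add_card_nbhd_sdiff {S A : Finset V} {u : V} (hu : u ∈ S)
    (hSA : S ⊆ A) : G.degree u ≤ (A.erase u).card + (nbhd G S \ A).card :=
  (card_le_card (neighborFinset_subset_erase_union_nbhd_sdiff G hu hSA)).trans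
    (card_union_le _ _)

end

theorem stmt6_general {V : Type*} [Fintype V] [DecidableEq V] (G : SimpleGraph V) [DecidableRel G.Adj]
    (f : ℕ) (F L C R : Finset V) (hpart : FPartition F L C R)
    (h1 : ¬ connTo G (f + 1) (R ∪ C) (L \ F))
    (hLC : (L ∪ C).card ≤ f) :
    ∀ u ∈ L \ F, G.degree u < 2 * f := by
  intro u hu
  obtain ⟨-, -, -, hcover, -, -⟩ := hpart
  have huL : u ∈ L := (mem_sdiff.mp hu).1
  have hboundary : (nbhd G (L \ F) \ L).card ≤ f := by
    refine (card_le_card fun v hv => ?_).trans (Nat.le_of_lt_succ (not_le.mp h1))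
    obtain ⟨hvN, hvL⟩ := mem_sdiff.mp hv
    have hv_cover : v ∈ L ∪ C ∪ R := hcover ▸ mem_univ v
    simp only [mem_union] at hv_cover
    exact mem_inter.mpr ⟨hvN, mem_union.mpr (by tauto)⟩
  have hL_pos : 0 < L.card := card_pos.mpr ⟨u, huL⟩
  have hL_le : L.card ≤ f := (card_le_card subset_union_left).trans hLC
  have hdeg := degree_le_card_erase_add_card_nbhd_sdiff G hu sdiff_subset
  rw [card_erase_of_mem huL] at hdeg
  omega

theorem stmt6 {V : Type*} [Fintype V] [DecidableEq V] (G : SimpleGraph V) [DecidableRel G.Adj]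
    (f : ℕ) (F L C R : Finset V) (hF : F.card ≤ f) (hpart : FPartition F L C R)
    (h1 : ¬ connTo G (f + 1) (R ∪ C) (L \ F)) (h2 : ¬ connTo G (f + 1) (L ∪ C) (R \ F))
    (hRC : f < (R ∪ C).card) (hLC : (L ∪ C).card ≤ f) :
    ∀ u ∈ L \ F, G.degree u < 2 * f :=
  stmt6_general G f F L C R hpart h1 hLC
end

section
/- Let G = (V,E) be a graph with a vertex cut T of size at most ⌊3f/2⌋ separating nonempty sets A and B (i.e., (A, T, B) partitions V and no edge joins A to B). Then G is not f-good: there exists F ⊆ V with |F| ≤ f and an F-partition (L, C, R) such that neither R ∪ C →(f+1) L \ F nor L ∪ C →(f+1) R \ F. -/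
open Finset

/-!
Split the cut `T` into three parts `X, Y, Z`, any two of which have at most `f` vertices
together; this is possible exactly when `2|T| ≤ 3f`. Take `F = X ∪ Y` and the partition
`L = A ∪ X`, `C = Z`, `R = B ∪ Y`. Then `L \ F = A` and `R \ F = B`, and since no edge joins `A`
to `B`, the neighbours of `A` in `R ∪ C` lie in `Y ∪ Z` and those of `B` in `L ∪ C` lie in
`X ∪ Z`: at most `f` vertices each.
-/

theorem Finset.exists_tripartition_card_add_le {α : Type*} [DecidableEq α] (T : Finset α)
    {f : ℕ} (h : 2 * #T ≤ 3 * f) :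
    ∃ X Y Z : Finset α, Disjoint X Y ∧ Disjoint X Z ∧ Disjoint Y Z ∧ X ∪ Y ∪ Z = T ∧
      #X + #Y ≤ f ∧ #X + #Z ≤ f ∧ #Y + #Z ≤ f := by
  obtain ⟨Z, hZT, hZ⟩ := T.exists_subset_card_eq (n := #T / 3) (Nat.div_le_self _ _)
  obtain ⟨X, hXTZ, hX⟩ :=
    (T \ Z).exists_subset_card_eq (n := #(T \ Z) / 2) (Nat.div_le_self _ _)
  have hTZ : #(T \ Z) = #T - #Z := card_sdiff_of_subset hZT
  have hY : #((T \ Z) \ X) = #(T \ Z) - #X := card_sdiff_of_subset hXTZ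
  refine ⟨X, (T \ Z) \ X, Z, disjoint_sdiff, disjoint_of_subset_left hXTZ sdiff_disjoint,
    disjoint_of_subset_left sdiff_subset sdiff_disjoint, ?_, by omega, by omega, by omega⟩
  rw [union_sdiff_of_subset hXTZ, sdiff_union_of_subset hZT]

theorem Finset.union_sdiff_eq_left {α : Type*} [DecidableEq α] {s t u : Finset α}
    (hs : Disjoint s u) (ht : t ⊆ u) : (s ∪ t) \ u = s := by
  rw [union_sdiff_distrib, sdiff_eq_left.mpr hs, sdiff_eq_empty_iff_subset.mpr ht, union_empty]

section Cut

variable {V : Type*} [Fintype V] [DecidableEq V] (G : SimpleGraph V) [DecidableRel G.Adj]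

theorem disjoint_nbhd_of_forall_not_adj {A B : Finset V}
    (hsep : ∀ a ∈ A, ∀ b ∈ B, ¬ G.Adj a b) : Disjoint (nbhd G A) B := by
  rw [disjoint_left]
  intro v hv hvB
  obtain ⟨-, u, hu, huv⟩ := (mem_filter.mp hv).2
  exact hsep u hu v hvB huv

theorem not_connTo_union_of_disjoint_nbhd {k : ℕ} {S U W : Finset V}
    (hU : Disjoint (nbhd G S) U) (hW : #W ≤ k) : ¬ connTo G (k + 1) (U ∪ W) S := by
  have hsub : nbhd G S ∩ (U ∪ W) ⊆ W := by
    rw [inter_union_distrib_left, disjoint_iff_inter_eq_empty.mp hU, empty_union]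
    exact inter_subset_right
  have := card_le_card hsub
  unfold connTo
  omega

end Cut

theorem stmt8_general {V : Type*} [Fintype V] [DecidableEq V] (G : SimpleGraph V) [DecidableRel G.Adj]
    (f : ℕ) (A T B : Finset V)
    (hAT : Disjoint A T) (hAB : Disjoint A B) (hTB : Disjoint T B)
    (hunion : A ∪ T ∪ B = Finset.univ)
    (hA : A.Nonempty) (hB : B.Nonempty) (hT : T.card ≤ 3 * f / 2)
    (hsep : ∀ a ∈ A, ∀ b ∈ B, ¬ G.Adj a b) :
    ∃ F L C R : Finset V, F.card ≤ f ∧ FPartition F L C R ∧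
      ¬ connTo G (f + 1) (R ∪ C) (L \ F) ∧ ¬ connTo G (f + 1) (L ∪ C) (R \ F) := by
  obtain ⟨X, Y, Z, hXY, hXZ, hYZ, rfl, hXYf, hXZf, hYZf⟩ :=
    T.exists_tripartition_card_add_le (f := f) (by omega)
  have hL : (A ∪ X) \ (X ∪ Y) = A :=
    union_sdiff_eq_left (hAT.mono_right subset_union_left) subset_union_left
  have hR : (B ∪ Y) \ (X ∪ Y) = B :=
    union_sdiff_eq_left (hTB.symm.mono_right subset_union_left) subset_union_right
  simp only [disjoint_union_left, disjoint_union_right] at hAT hTB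
  refine ⟨X ∪ Y, A ∪ X, Z, B ∪ Y, (card_union_le X Y).trans hXYf, ?_, ?_, ?_⟩
  · refine ⟨disjoint_union_left.mpr ⟨hAT.2, hXZ⟩, ?_, ?_, ?_, by rwa [hL], by rwa [hR]⟩
    · simp only [disjoint_union_left, disjoint_union_right]
      exact ⟨⟨hAB, hTB.1.1⟩, hAT.1.2, hXY⟩
    · exact disjoint_union_right.mpr ⟨hTB.2, hYZ.symm⟩
    · rw [← hunion]
      ext v
      simp only [mem_union]
      tauto
  · rw [hL, union_assoc]
    exact not_connTo_union_of_disjoint_nbhd G (disjoint_nbhd_of_forall_not_adj G hsep)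
      ((card_union_le Y Z).trans hYZf)
  · rw [hR, union_assoc]
    exact not_connTo_union_of_disjoint_nbhd G
      (disjoint_nbhd_of_forall_not_adj G fun b hb a ha h => hsep a ha b hb h.symm)
      ((card_union_le X Z).trans hXZf)

theorem stmt8 {V : Type*} [Fintype V] [DecidableEq V] (G : SimpleGraph V) [DecidableRel G.Adj]
    (f : ℕ) (hf : 1 ≤ f) (A T B : Finset V)
    (hAT : Disjoint A T) (hAB : Disjoint A B) (hTB : Disjoint T B)
    (hunion : A ∪ T ∪ B = Finset.univ)
    (hA : A.Nonempty) (hB : B.Nonempty) (hT : T.card ≤ 3 * f / 2)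
    (hsep : ∀ a ∈ A, ∀ b ∈ B, ¬ G.Adj a b)
    (hGA : nbhd G A = T) (hGB : nbhd G B = T) :
    ∃ F L C R : Finset V, F.card ≤ f ∧ FPartition F L C R ∧
      ¬ connTo G (f + 1) (R ∪ C) (L \ F) ∧ ¬ connTo G (f + 1) (L ∪ C) (R \ F) :=
  stmt8_general G f A T B hAT hAB hTB hunion hA hB hT hsep
end

section
/- If a graph G has a vertex u of degree strictly less than 2f, and |V| ≥ 2f + 1, then G is not f-good: taking F to be min(f−1, deg(u)) neighbors of u, L = {u} ∪ F, C = ∅, and R = V \ L yields an F-partition with neither R ∪ C →(f+1) L \ F nor L ∪ C →(f+1) R \ F. -/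
open Finset

/-
Take `L = {u} ∪ F` with `F` a set of `min (f - 1) (deg u)` neighbours of `u`, and `R` the rest.
Since `|L| ≤ f`, at most `f` vertices of `L` lie in any `Γ(S)`. The only vertex of `L \ F` is `u`,
and its neighbours in `R` are those outside `F`: there are `deg u - |F| ≤ f` of them, because
`deg u < 2f`.
-/

section

variable {V : Type*} [Fintype V] [DecidableEq V]

theorem nbhd_singleton (G : SimpleGraph V) [DecidableRel G.Adj] (u : V) :
    nbhd G {u} = G.neighborFinset u := by
  ext v
  simp only [nbhd, mem_filter, mem_univ, true_and, mem_singleton, exists_eq_left,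
    SimpleGraph.mem_neighborFinset]
  exact ⟨And.right, fun h => ⟨h.ne', h⟩⟩

theorem nbhd_singleton_inter_compl_insert (G : SimpleGraph V) [DecidableRel G.Adj] (u : V)
    (F : Finset V) :
    nbhd G {u} ∩ (univ \ insert u F) = G.neighborFinset u \ F := by
  ext v
  simp only [nbhd_singleton, mem_inter, mem_sdiff, mem_univ, true_and, mem_insert, not_or,
    SimpleGraph.mem_neighborFinset]
  exact ⟨fun h => ⟨h.1, h.2.2⟩, fun h => ⟨h.1, h.1.ne', h.2⟩⟩

theorem fPartition_insert_empty_compl {u : V} {F : Finset V} (hu : u ∉ F)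
    (hcard : F.card + 1 < Fintype.card V) :
    FPartition F (insert u F) ∅ (univ \ insert u F) := by
  refine ⟨disjoint_empty_right _, disjoint_sdiff, disjoint_empty_left _, ?_,
    ⟨u, mem_sdiff.mpr ⟨mem_insert_self u F, hu⟩⟩, ?_⟩
  · rw [union_empty, union_sdiff_of_subset (subset_univ _)]
  · rw [sdiff_sdiff_left, sup_eq_left.mpr (subset_insert u F), ← card_pos,
      card_univ_sdiff, card_insert_of_notMem hu]
    omega

end

theorem stmt10_general {V : Type*} [Fintype V] [DecidableEq V] (G : SimpleGraph V) [DecidableRel G.Adj]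
    (f : ℕ) (u : V) (hdeg : G.degree u < 2 * f)
    (hn : 2 * f + 1 ≤ Fintype.card V) :
    ∃ F : Finset V, F ⊆ G.neighborFinset u ∧ F.card = min (f - 1) (G.degree u) ∧
      FPartition F (insert u F) ∅ (Finset.univ \ insert u F) ∧
      ¬ connTo G (f + 1) ((Finset.univ \ insert u F) ∪ ∅) (insert u F \ F) ∧
      ¬ connTo G (f + 1) (insert u F ∪ ∅) ((Finset.univ \ insert u F) \ F) := by
  obtain ⟨F, hFsub, hFcard⟩ := exists_subset_card_eq (s := G.neighborFinset u)
    (n := min (f - 1) (G.degree u)) (by simp)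
  have hu : u ∉ F := fun h => G.notMem_neighborFinset_self u (hFsub h)
  have hF : F.card ≤ f - 1 := hFcard ▸ min_le_left _ _
  have hL : (insert u F).card = F.card + 1 := card_insert_of_notMem hu
  refine ⟨F, hFsub, hFcard, fPartition_insert_empty_compl hu (by omega), ?_, ?_⟩
  · have hcut : (G.neighborFinset u \ F).card = G.degree u - F.card := by
      rw [card_sdiff_of_subset hFsub, G.card_neighborFinset_eq_degree]
    rw [connTo, union_empty, insert_sdiff_cancel hu,
      nbhd_singleton_inter_compl_insert G u F, hcut]
    omega
  · rw [connTo, union_empty, not_le]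
    calc #(nbhd G ((univ \ insert u F) \ F) ∩ insert u F) ≤ #(insert u F) :=
          card_le_card inter_subset_right
      _ < f + 1 := by omega

theorem stmt10 {V : Type*} [Fintype V] [DecidableEq V] (G : SimpleGraph V) [DecidableRel G.Adj]
    (f : ℕ) (hf : 1 ≤ f) (u : V) (hdeg : G.degree u < 2 * f)
    (hn : 2 * f + 1 ≤ Fintype.card V) :
    ∃ F : Finset V, F ⊆ G.neighborFinset u ∧ F.card = min (f - 1) (G.degree u) ∧
      FPartition F (insert u F) ∅ (Finset.univ \ insert u F) ∧
      ¬ connTo G (f + 1) ((Finset.univ \ insert u F) ∪ ∅) (insert u F \ F) ∧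
      ¬ connTo G (f + 1) (insert u F ∪ ∅) ((Finset.univ \ insert u F) \ F) :=
  stmt10_general G f u hdeg hn
end
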